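/- arXiv:1902.02054 — 2 statements merged into one kernel-verified Lean document; each statement's English description precedes it below -/
import Mathlib

section
/- Let n ≥ 2, let Σ ⊂ ℝ^{n−1} be an open bounded set with 0 ∈ Σ, let Ω = ℝ × Σ ⊆ ℝⁿ, and let λ ∈ ℝ. Suppose f ∈ L²(Ω) satisfies, for every smooth compactly supported φ : ℝⁿ → ℂ with support contained in Ω, ∫_Ω conj(f)·(x·∇φ) dx = (λ − n/2) ∫_Ω conj(f)·φ dx. Fix such a φ and let t₀ ≥ 1 be such that for every t ≥ t₀ the function x ↦ φ(tx) is smooth with compact support contained in Ω. Then for all t ≥ t₀ one has ∫_Ω conj(f(x))·φ(t x) dx = (t/t₀)^{λ − n/2} · ∫_Ω conj(f(x))·φ(t₀ x) dx. -/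
open MeasureTheory Complex

/-- The radial derivative `x · ∇u (x) = ∑_{j=1}^n x j * ∂ⱼ u x` of a function on
`ℝⁿ = ℝ × ℝ^{n-1}` (first coordinate: the axis of the waveguide). -/
noncomputable def radialDeriv {m : ℕ} (u : ℝ × EuclideanSpace ℝ (Fin m) → ℂ)
    (x : ℝ × EuclideanSpace ℝ (Fin m)) : ℂ :=
  (x.1 : ℂ) * fderiv ℝ u x (1, 0) +
    ∑ j : Fin m, (x.2 j : ℂ) * fderiv ℝ u x (0, EuclideanSpace.single j 1)

/-- A test function on `Ω`: smooth, compactly supported, with support contained in `Ω`. -/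
def IsTestFun {m : ℕ} (Ω : Set (ℝ × EuclideanSpace ℝ (Fin m)))
    (φ : ℝ × EuclideanSpace ℝ (Fin m) → ℂ) : Prop :=
  ContDiff ℝ (⊤ : ℕ∞) φ ∧ HasCompactSupport φ ∧ tsupport φ ⊆ Ω

/-- Decomposition of a continuous linear functional on `ℝ × ℝ^m` along the
standard basis directions. -/
lemma clm_decomp {m : ℕ} (L : (ℝ × EuclideanSpace ℝ (Fin m)) →L[ℝ] ℂ)
    (x : ℝ × EuclideanSpace ℝ (Fin m)) :
    L x = (x.1 : ℂ) * L (1, 0) +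
      ∑ j : Fin m, (x.2 j : ℂ) * L (0, EuclideanSpace.single j 1) := by
  have hx : x = x.1 • ((1 : ℝ), (0 : EuclideanSpace ℝ (Fin m)))
      + ∑ j : Fin m, x.2 j • ((0 : ℝ), EuclideanSpace.single j (1 : ℝ)) := by
    refine Prod.ext ?_ ?_
    · simp [Prod.fst_sum]
    · simp only [Prod.snd_sum, Prod.smul_snd, Prod.smul_fst, smul_zero, smul_eq_mul, mul_one,
        Prod.snd_add]
      ext k
      have h1 : (∑ j : Fin m, x.2 j • EuclideanSpace.single j (1:ℝ)) k
          = ∑ j : Fin m, (x.2 j • EuclideanSpace.single j (1:ℝ)) k :=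
        by rw [WithLp.ofLp_sum, Finset.sum_apply]
      have h2 : ∀ j : Fin m, (x.2 j • EuclideanSpace.single j (1:ℝ)) k
          = x.2 j * (if k = j then (1:ℝ) else 0) := by
        intro j
        rw [PiLp.smul_apply, EuclideanSpace.single_apply, smul_eq_mul]
      calc x.2 k = (0:EuclideanSpace ℝ (Fin m)) k
            + ∑ j : Fin m, x.2 j * (if k = j then (1:ℝ) else 0) := by
              simp [Finset.sum_ite_eq', mul_comm]
        _ = ((0:EuclideanSpace ℝ (Fin m)) + ∑ j : Fin m,
              x.2 j • EuclideanSpace.single j (1:ℝ)) k := by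
              rw [PiLp.add_apply, h1]
              simp only [h2]
  conv_lhs => rw [hx]
  rw [map_add, L.map_smul, map_sum]
  simp only [Complex.real_smul]
  congr 1
  refine Finset.sum_congr rfl fun j _ => ?_
  rw [L.map_smul, Complex.real_smul]

lemma hasFDerivAt_dilate {E F : Type*} [NormedAddCommGroup E] [NormedSpace ℝ E]
    [NormedAddCommGroup F] [NormedSpace ℝ F]
    {φ : E → F} (hφ : Differentiable ℝ φ) (t : ℝ) (x : E) :
    HasFDerivAt (fun y => φ (t • y)) (t • fderiv ℝ φ (t • x)) x := by
  have h1 : HasFDerivAt (fun y : E => t • y) (t • ContinuousLinearMap.id ℝ E) x :=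
    (t • ContinuousLinearMap.id ℝ E).hasFDerivAt
  have h2 := (hφ (t • x)).hasFDerivAt.comp x h1
  convert h2 using 1
  ext v
  simp
  ext v
  simp

lemma hasDerivAt_dilate {E F : Type*} [NormedAddCommGroup E] [NormedSpace ℝ E]
    [NormedAddCommGroup F] [NormedSpace ℝ F]
    {φ : E → F} (hφ : Differentiable ℝ φ) (t : ℝ) (x : E) :
    HasDerivAt (fun s : ℝ => φ (s • x)) (fderiv ℝ φ (t • x) x) t := by
  have h1 : HasDerivAt (fun s : ℝ => s • x) x t := by
    simpa using (hasDerivAt_id t).smul_const x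
  exact (hφ (t • x)).hasFDerivAt.comp_hasDerivAt t h1

lemma radialDeriv_dilate {m : ℕ} {φ : ℝ × EuclideanSpace ℝ (Fin m) → ℂ}
    (hφ : Differentiable ℝ φ) (s : ℝ) (x : ℝ × EuclideanSpace ℝ (Fin m)) :
    radialDeriv (fun y => φ (s • y)) x = (s : ℂ) * fderiv ℝ φ (s • x) x := by
  unfold radialDeriv
  rw [(hasFDerivAt_dilate hφ s x).fderiv]
  simp only [ContinuousLinearMap.smul_apply, Complex.real_smul]
  conv_rhs => rw [clm_decomp (fderiv ℝ φ (s • x)) x]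
  rw [mul_add, Finset.mul_sum]
  congr 1
  · ring
  · refine Finset.sum_congr rfl fun j _ => ?_
    ring

lemma integrable_indicator_ball {m : ℕ} (Ω : Set (ℝ × EuclideanSpace ℝ (Fin m)))
    {f : ℝ × EuclideanSpace ℝ (Fin m) → ℂ} (hf : MemLp f 2 (volume.restrict Ω))
    (C R : ℝ) :
    Integrable ((Metric.closedBall (0 : ℝ × EuclideanSpace ℝ (Fin m)) R).indicator
      (fun x => C * ‖f x‖)) (volume.restrict Ω) := by
  rw [integrable_indicator_iff measurableSet_closedBall]
  have h1 : MemLp f 2 ((volume.restrict Ω).restrict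
      (Metric.closedBall (0 : ℝ × EuclideanSpace ℝ (Fin m)) R)) := hf.restrict _
  haveI : IsFiniteMeasure ((volume.restrict Ω).restrict
      (Metric.closedBall (0 : ℝ × EuclideanSpace ℝ (Fin m)) R)) := by
    constructor
    rw [Measure.restrict_apply_univ]
    exact lt_of_le_of_lt (Measure.restrict_le_self _)
      ((isCompact_closedBall _ _).measure_lt_top)
  exact ((h1.integrable one_le_two).norm).const_mul C

/-- on the straight waveguide `Ω = ℝ × Σ ⊆ ℝⁿ` (`Σ` open bounded, `0 ∈ Σ`,
`n ≥ 2`), if `f ∈ L²(Ω)` satisfies the weak equation `A₀* f = iλ f`, `φ` is a test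
function on `Ω`, and `t₀ ≥ 1` is such that the dilated functions `x ↦ φ(t x)` are test
functions on `Ω` for all `t ≥ t₀`, then
`∫_Ω conj f(x) φ(t x) dx = (t/t₀)^{λ − n/2} ∫_Ω conj f(x) φ(t₀ x) dx` for all `t ≥ t₀`. -/
theorem statement2 (n : ℕ) (hn : 2 ≤ n)
    (S : Set (EuclideanSpace ℝ (Fin (n - 1)))) (hSopen : IsOpen S)
    (hSbdd : Bornology.IsBounded S) (hS0 : (0 : EuclideanSpace ℝ (Fin (n - 1))) ∈ S)
    (Ω : Set (ℝ × EuclideanSpace ℝ (Fin (n - 1)))) (hΩ : Ω = Set.univ ×ˢ S)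
    (lam : ℝ)
    (f : ℝ × EuclideanSpace ℝ (Fin (n - 1)) → ℂ)
    (hf : MemLp f 2 (volume.restrict Ω))
    (hweak : ∀ φ, IsTestFun Ω φ →
      ∫ x in Ω, (starRingEnd ℂ) (f x) * radialDeriv φ x
        = ((lam - n / 2 : ℝ) : ℂ) * ∫ x in Ω, (starRingEnd ℂ) (f x) * φ x)
    (φ : ℝ × EuclideanSpace ℝ (Fin (n - 1)) → ℂ) (hφ : IsTestFun Ω φ)
    (t₀ : ℝ) (ht₀ : 1 ≤ t₀)
    (hdil : ∀ t, t₀ ≤ t → IsTestFun Ω (fun x => φ (t • x))) :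
    ∀ t, t₀ ≤ t →
      ∫ x in Ω, (starRingEnd ℂ) (f x) * φ (t • x)
        = (((t / t₀) ^ (lam - n / 2) : ℝ) : ℂ) *
            ∫ x in Ω, (starRingEnd ℂ) (f x) * φ (t₀ • x) := by
  intro t ht
  obtain ⟨hφsm, hφcs, hφΩ⟩ := hφ
  have hφd : Differentiable ℝ φ := hφsm.differentiable (by simp)
  have hφc : Continuous φ := hφsm.continuous
  have hDc : Continuous (fderiv ℝ φ) := hφsm.continuous_fderiv (by simp)
  -- a radius containing the support
  obtain ⟨r, hr⟩ := hφcs.isBounded.subset_closedBall 0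
  set R : ℝ := max r 1 with hRdef
  have hR1 : (1 : ℝ) ≤ R := le_max_right _ _
  have hR0 : (0 : ℝ) < R := lt_of_lt_of_le one_pos hR1
  have hsupp : tsupport φ ⊆ Metric.closedBall 0 R :=
    hr.trans (Metric.closedBall_subset_closedBall (le_max_left _ _))
  -- bounds on φ and its derivative
  obtain ⟨M, hM⟩ := (hφcs.fderiv ℝ).exists_bound_of_continuous hDc
  obtain ⟨Cφ, hCφ⟩ := hφcs.exists_bound_of_continuous hφc
  have hM0 : 0 ≤ M := le_trans (norm_nonneg _) (hM 0)
  -- vanishing outside the support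
  have hvan : ∀ (u : ℝ) (x : ℝ × EuclideanSpace ℝ (Fin (n-1))), 0 < u → R < u * ‖x‖ →
      φ (u • x) = 0 ∧ fderiv ℝ φ (u • x) = 0 := by
    intro u x hu hR
    have hx : u • x ∉ tsupport φ := by
      intro hmem
      have := hsupp hmem
      rw [Metric.mem_closedBall, dist_zero_right, norm_smul, Real.norm_eq_abs,
        abs_of_pos hu] at this
      linarith
    exact ⟨image_eq_zero_of_notMem_tsupport hx, fderiv_of_notMem_tsupport ℝ hx⟩
  have hfc : AEStronglyMeasurable (fun x => (starRingEnd ℂ) (f x)) (volume.restrict Ω) :=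
    Complex.continuous_conj.comp_aestronglyMeasurable hf.aestronglyMeasurable
  set c : ℝ := lam - n / 2 with hc
  set F : ℝ → ℂ := fun s => ∫ x in Ω, (starRingEnd ℂ) (f x) * φ (s • x) with hF
  have ht₀0 : (0 : ℝ) < t₀ := lt_of_lt_of_le one_pos ht₀
  -- the derivative of F
  have key : ∀ s, t₀ ≤ s →
      HasDerivAt F (∫ x in Ω, (starRingEnd ℂ) (f x) * (fderiv ℝ φ (s • x) x)) s := by
    intro s hs
    have hs1 : (1 : ℝ) ≤ s := le_trans ht₀ hs
    have hmain := hasDerivAt_integral_of_dominated_loc_of_deriv_le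
      (μ := volume.restrict Ω) (x₀ := s)
      (F := fun u x => (starRingEnd ℂ) (f x) * φ (u • x))
      (F' := fun u x => (starRingEnd ℂ) (f x) * (fderiv ℝ φ (u • x) x))
      (bound := (Metric.closedBall (0 : ℝ × EuclideanSpace ℝ (Fin (n-1))) (2*R)).indicator
        (fun x => (M * (2*R)) * ‖f x‖))
      (s := Metric.ball s (1/2)) (Metric.ball_mem_nhds s (by norm_num))
      (Filter.Eventually.of_forall fun u =>
        hfc.mul ((hφc.comp (continuous_const_smul _)).aestronglyMeasurable))
      ?_ ?_ ?_ ?_ ?_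
    · exact hmain.2
    · -- integrability of F s
      refine Integrable.mono'
        (integrable_indicator_ball Ω hf Cφ R) (hfc.mul
          ((hφc.comp (continuous_const_smul _)).aestronglyMeasurable))
        (Filter.Eventually.of_forall fun x => ?_)
      by_cases hx : x ∈ Metric.closedBall (0 : ℝ × EuclideanSpace ℝ (Fin (n-1))) R
      · rw [Set.indicator_of_mem hx]
        rw [norm_mul, RingHomIsometric.norm_map]
        calc ‖f x‖ * ‖φ (s • x)‖ ≤ ‖f x‖ * Cφ := by
              exact mul_le_mul_of_nonneg_left (hCφ _) (norm_nonneg _)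
          _ = Cφ * ‖f x‖ := mul_comm _ _
      · rw [Set.indicator_of_notMem hx]
        rw [Metric.mem_closedBall, dist_zero_right, not_le] at hx
        have h0 : φ (s • x) = 0 := by
          refine (hvan s x (lt_of_lt_of_le one_pos hs1) ?_).1
          calc R < ‖x‖ := hx
            _ = 1 * ‖x‖ := (one_mul _).symm
            _ ≤ s * ‖x‖ := by
                exact mul_le_mul_of_nonneg_right hs1 (norm_nonneg _)
        simp [h0]
    · -- measurability of F' s
      exact hfc.mul (((hDc.comp (continuous_const_smul _)).clm_apply
        continuous_id).aestronglyMeasurable)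
    · -- bound
      refine Filter.Eventually.of_forall fun x => fun u hu => ?_
      rw [Metric.mem_ball, Real.dist_eq, abs_lt] at hu
      have hupos : (1:ℝ)/2 < u := by
        have : t₀ ≤ s := hs
        linarith
      by_cases hx : x ∈ Metric.closedBall (0 : ℝ × EuclideanSpace ℝ (Fin (n-1))) (2*R)
      · rw [Set.indicator_of_mem hx]
        rw [Metric.mem_closedBall, dist_zero_right] at hx
        rw [norm_mul, RingHomIsometric.norm_map]
        calc ‖f x‖ * ‖(fderiv ℝ φ (u • x)) x‖
            ≤ ‖f x‖ * (M * (2*R)) := by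
              refine mul_le_mul_of_nonneg_left ?_ (norm_nonneg _)
              calc ‖(fderiv ℝ φ (u • x)) x‖ ≤ ‖fderiv ℝ φ (u • x)‖ * ‖x‖ :=
                    ContinuousLinearMap.le_opNorm _ _
                _ ≤ M * (2*R) := by
                    exact mul_le_mul (hM _) hx (norm_nonneg _) hM0
          _ = (M * (2*R)) * ‖f x‖ := mul_comm _ _
      · rw [Set.indicator_of_notMem hx]
        rw [Metric.mem_closedBall, dist_zero_right, not_le] at hx
        have h0 : fderiv ℝ φ (u • x) = 0 := by
          refine (hvan u x (by linarith) ?_).2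
          calc R = (1/2) * (2*R) := by ring
            _ < u * ‖x‖ := by
                refine mul_lt_mul hupos (le_of_lt hx) (by linarith) ?_
                linarith
        simp [h0]
    · exact integrable_indicator_ball Ω hf (M * (2*R)) (2*R)
    · -- differentiability in the parameter
      refine Filter.Eventually.of_forall fun x => fun u _ => ?_
      exact (hasDerivAt_dilate hφd u x).const_mul ((starRingEnd ℂ) (f x))
  -- the weak equation turns into an ODE
  have keyODE : ∀ s, t₀ ≤ s →
      (s : ℂ) * (∫ x in Ω, (starRingEnd ℂ) (f x) * (fderiv ℝ φ (s • x) x))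
        = (c : ℂ) * F s := by
    intro s hs
    have hw := hweak _ (hdil s hs)
    have hcongr : ∫ x in Ω, (starRingEnd ℂ) (f x) * radialDeriv (fun y => φ (s • y)) x
        = ∫ x in Ω, (s : ℂ) * ((starRingEnd ℂ) (f x) * (fderiv ℝ φ (s • x) x)) := by
      refine integral_congr_ae (Filter.Eventually.of_forall fun x => ?_)
      have : (starRingEnd ℂ) (f x) * radialDeriv (fun y => φ (s • y)) x
          = (s : ℂ) * ((starRingEnd ℂ) (f x) * (fderiv ℝ φ (s • x) x)) := by
        rw [radialDeriv_dilate hφd s x]; ring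
      exact this
    rw [hcongr, integral_const_mul] at hw
    rw [hw]
  -- the auxiliary function G
  set G : ℝ → ℂ := fun s => ((s ^ (-c) : ℝ) : ℂ) * F s with hG
  have hGderiv : ∀ s, t₀ ≤ s → HasDerivAt G 0 s := by
    intro s hs
    have hs0 : (0 : ℝ) < s := lt_of_lt_of_le ht₀0 hs
    have h1 : HasDerivAt (fun s : ℝ => ((s ^ (-c) : ℝ) : ℂ))
        (((-c) * s ^ (-c - 1) : ℝ) : ℂ) s :=
      (Real.hasDerivAt_rpow_const (Or.inl hs0.ne')).ofReal_comp
    have h2 := key s hs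
    have h3 := h1.mul h2
    have hDs : (∫ x in Ω, (starRingEnd ℂ) (f x) * (fderiv ℝ φ (s • x) x))
        = (c : ℂ) / (s : ℂ) * F s := by
      have hsne : (s : ℂ) ≠ 0 := by
        exact_mod_cast hs0.ne'
      field_simp
      rw [mul_comm]
      exact keyODE s hs
    rw [hDs] at h3
    convert h3 using 1
    · rfl
    · rfl
    have hpow : s ^ (-c - 1) = s ^ (-c) / s := by
      rw [← Real.rpow_sub_one hs0.ne']
    rw [hpow]
    have hsne : (s : ℂ) ≠ 0 := by exact_mod_cast hs0.ne'
    push_cast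
    field_simp
    ring
  -- constancy of G on [t₀, t]
  have hGconst : G t = G t₀ := by
    have := constant_of_has_deriv_right_zero (f := G) (a := t₀) (b := t)
      (fun s hs => ((hGderiv s hs.1).continuousAt).continuousWithinAt)
      (fun s hs => ((hGderiv s hs.1).hasDerivWithinAt))
    exact this t (Set.right_mem_Icc.2 ht)
  -- unravel
  have ht0pos : (0 : ℝ) < t := lt_of_lt_of_le ht₀0 ht
  have htc : (0:ℝ) < t ^ (-c) := Real.rpow_pos_of_pos ht0pos _
  have htcne : ((t ^ (-c) : ℝ) : ℂ) ≠ 0 := by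
    exact_mod_cast htc.ne'
  have hreal : t ^ (-c) * (t / t₀) ^ c = t₀ ^ (-c) := by
    rw [Real.div_rpow (le_of_lt ht0pos) (le_of_lt ht₀0),
      Real.rpow_neg (le_of_lt ht0pos), Real.rpow_neg (le_of_lt ht₀0)]
    have h1 : t ^ c ≠ 0 := (Real.rpow_pos_of_pos ht0pos _).ne'
    field_simp
  apply mul_left_cancel₀ htcne
  calc ((t ^ (-c) : ℝ) : ℂ) * F t = G t := rfl
    _ = G t₀ := hGconst
    _ = ((t ^ (-c) : ℝ) : ℂ) * ((((t / t₀) ^ c : ℝ) : ℂ) * F t₀) := by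
        rw [← mul_assoc, ← Complex.ofReal_mul, hreal]
end

section
/- Let a < b, c < d be real numbers and Ω = ℝ × [a,b] × [c,d] ⊂ ℝ³ with coordinates (y, σ₁, σ₂). Let f : ℝ³ → ℂ be smooth, with support contained in K × [a,b] × [c,d] for some compact K ⊂ ℝ, and such that f(y,σ₁,σ₂) = 0 whenever σ₁ ∈ {a,b} or σ₂ ∈ {c,d}. Then 2 Re ∫_Ω conj(−Δf)·( y ∂_y f + σ₁ ∂_{σ₁} f + σ₂ ∂_{σ₂} f + (3/2) f ) dy dσ₁ dσ₂ = 2 ∫_Ω |∇f|² dy dσ₁ dσ₂ − ∫_ℝ ∫_c^d ( b·|∂_{σ₁}f(y,b,σ₂)|² − a·|∂_{σ₁}f(y,a,σ₂)|² ) dσ₂ dy − ∫_ℝ ∫_a^b ( d·|∂_{σ₂}f(y,σ₁,d)|² − c·|∂_{σ₂}f(y,σ₁,c)|² ) dσ₁ dy, where Δf = ∂_y²f + ∂_{σ₁}²f + ∂_{σ₂}²f and |∇f|² = |∂_y f|² + |∂_{σ₁} f|² + |∂_{σ₂} f|². -/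
open MeasureTheory Complex intervalIntegral

/-- Partial derivative in the first (longitudinal) variable. -/
noncomputable def dY (f : ℝ → ℝ → ℝ → ℂ) : ℝ → ℝ → ℝ → ℂ :=
  fun y s t => deriv (fun y' => f y' s t) y

/-- Partial derivative in the second variable `σ₁`. -/
noncomputable def dS (f : ℝ → ℝ → ℝ → ℂ) : ℝ → ℝ → ℝ → ℂ :=
  fun y s t => deriv (fun s' => f y s' t) s

/-- Partial derivative in the third variable `σ₂`. -/
noncomputable def dT (f : ℝ → ℝ → ℝ → ℂ) : ℝ → ℝ → ℝ → ℂ :=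
  fun y s t => deriv (fun t' => f y s t') t


open Set

set_option linter.unusedSectionVars false



noncomputable section WGHelpers

/-- Partial derivative operators on `ℝ × ℝ × ℝ` via `fderiv`. -/
def DD1 {E : Type*} [NormedAddCommGroup E] [NormedSpace ℝ E] (G : ℝ × ℝ × ℝ → E) :
    ℝ × ℝ × ℝ → E := fun p => fderiv ℝ G p (1, 0, 0)

def DD2 {E : Type*} [NormedAddCommGroup E] [NormedSpace ℝ E] (G : ℝ × ℝ × ℝ → E) :
    ℝ × ℝ × ℝ → E := fun p => fderiv ℝ G p (0, 1, 0)

def DD3 {E : Type*} [NormedAddCommGroup E] [NormedSpace ℝ E] (G : ℝ × ℝ × ℝ → E) :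
    ℝ × ℝ × ℝ → E := fun p => fderiv ℝ G p (0, 0, 1)

variable {E : Type*} [NormedAddCommGroup E] [NormedSpace ℝ E]

lemma hdA1 {G : ℝ × ℝ × ℝ → E} (hG : ContDiff ℝ (⊤ : ℕ∞) G) (y s t : ℝ) :
    HasDerivAt (fun y' => G (y', s, t)) (DD1 G (y, s, t)) y := by
  have hc : HasDerivAt (fun y' : ℝ => ((y', s, t) : ℝ × ℝ × ℝ)) ((1 : ℝ), (0 : ℝ), (0 : ℝ)) y :=
    (hasDerivAt_id y).prodMk (hasDerivAt_const _ _)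
  exact ((hG.differentiable (by simp) (y, s, t)).hasFDerivAt).comp_hasDerivAt y hc

lemma hdA2 {G : ℝ × ℝ × ℝ → E} (hG : ContDiff ℝ (⊤ : ℕ∞) G) (y s t : ℝ) :
    HasDerivAt (fun s' => G (y, s', t)) (DD2 G (y, s, t)) s := by
  have hc : HasDerivAt (fun s' : ℝ => ((y, s', t) : ℝ × ℝ × ℝ)) ((0 : ℝ), (1 : ℝ), (0 : ℝ)) s :=
    (hasDerivAt_const _ _).prodMk ((hasDerivAt_id s).prodMk (hasDerivAt_const _ _))
  exact ((hG.differentiable (by simp) (y, s, t)).hasFDerivAt).comp_hasDerivAt s hc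

lemma hdA3 {G : ℝ × ℝ × ℝ → E} (hG : ContDiff ℝ (⊤ : ℕ∞) G) (y s t : ℝ) :
    HasDerivAt (fun t' => G (y, s, t')) (DD3 G (y, s, t)) t := by
  have hc : HasDerivAt (fun t' : ℝ => ((y, s, t') : ℝ × ℝ × ℝ)) ((0 : ℝ), (0 : ℝ), (1 : ℝ)) t :=
    (hasDerivAt_const _ _).prodMk ((hasDerivAt_const _ _).prodMk (hasDerivAt_id t))
  exact ((hG.differentiable (by simp) (y, s, t)).hasFDerivAt).comp_hasDerivAt t hc

lemma DD1_contDiff {G : ℝ × ℝ × ℝ → E} (hG : ContDiff ℝ (⊤ : ℕ∞) G) : ContDiff ℝ (⊤ : ℕ∞) (DD1 G) :=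
  (hG.fderiv_right (by simp)).clm_apply contDiff_const

lemma DD2_contDiff {G : ℝ × ℝ × ℝ → E} (hG : ContDiff ℝ (⊤ : ℕ∞) G) : ContDiff ℝ (⊤ : ℕ∞) (DD2 G) :=
  (hG.fderiv_right (by simp)).clm_apply contDiff_const

lemma DD3_contDiff {G : ℝ × ℝ × ℝ → E} (hG : ContDiff ℝ (⊤ : ℕ∞) G) : ContDiff ℝ (⊤ : ℕ∞) (DD3 G) :=
  (hG.fderiv_right (by simp)).clm_apply contDiff_const

lemma DD_support {G : ℝ × ℝ × ℝ → E} {S : Set (ℝ × ℝ × ℝ)} (hS : IsClosed S)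
    (h : Function.support G ⊆ S) (v : ℝ × ℝ × ℝ) :
    Function.support (fun p => fderiv ℝ G p v) ⊆ S := by
  intro p hp
  have h1 : fderiv ℝ G p ≠ 0 := by
    intro h0
    apply hp
    simp [h0]
  have h2 : p ∈ tsupport G := support_fderiv_subset ℝ h1
  exact (closure_minimal h hS) h2

lemma fderiv_apply_const {G : ℝ × ℝ × ℝ → E} (hG : ContDiff ℝ (⊤ : ℕ∞) G) (p v w : ℝ × ℝ × ℝ) :
    fderiv ℝ (fun q => fderiv ℝ G q w) p v = fderiv ℝ (fderiv ℝ G) p v w := by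
  have hd : DifferentiableAt ℝ (fderiv ℝ G) p :=
    ((hG.fderiv_right (m := (⊤ : ℕ∞)) (by simp)).differentiable (by simp)) p
  rw [fderiv_clm_apply hd (differentiableAt_const w)]
  simp

lemma DD_comm {G : ℝ × ℝ × ℝ → E} (hG : ContDiff ℝ (⊤ : ℕ∞) G) (v w : ℝ × ℝ × ℝ) (p : ℝ × ℝ × ℝ) :
    fderiv ℝ (fun q => fderiv ℝ G q w) p v = fderiv ℝ (fun q => fderiv ℝ G q v) p w := by
  rw [fderiv_apply_const hG, fderiv_apply_const hG]
  exact (hG.contDiffAt.isSymmSndFDerivAt ((by rw [minSmoothness_of_isRCLikeNormedField]; exact WithTop.coe_le_coe.2 le_top))) v w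

lemma DD12_comm {G : ℝ × ℝ × ℝ → E} (hG : ContDiff ℝ (⊤ : ℕ∞) G) : DD2 (DD1 G) = DD1 (DD2 G) := by
  funext p; exact DD_comm hG _ _ p

lemma DD13_comm {G : ℝ × ℝ × ℝ → E} (hG : ContDiff ℝ (⊤ : ℕ∞) G) : DD3 (DD1 G) = DD1 (DD3 G) := by
  funext p; exact DD_comm hG _ _ p

lemma DD23_comm {G : ℝ × ℝ × ℝ → E} (hG : ContDiff ℝ (⊤ : ℕ∞) G) : DD3 (DD2 G) = DD2 (DD3 G) := by
  funext p; exact DD_comm hG _ _ p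

/-- derivative of conjugate -/
lemma HasDerivAt.cconj {g : ℝ → ℂ} {g' : ℂ} {x : ℝ} (h : HasDerivAt g g' x) :
    HasDerivAt (fun y => (starRingEnd ℂ) (g y)) ((starRingEnd ℂ) g') x := by
  exact Complex.conjCLE.hasFDerivAt.comp_hasDerivAt x h

/-- derivative of real part -/
lemma HasDerivAt.cre {g : ℝ → ℂ} {g' : ℂ} {x : ℝ} (h : HasDerivAt g g' x) :
    HasDerivAt (fun y => (g y).re) g'.re x := by
  exact Complex.reCLM.hasFDerivAt.comp_hasDerivAt x h

lemma normsq_eq (z : ℂ) : ‖z‖ ^ 2 = ((starRingEnd ℂ) z * z).re := by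
  rw [Complex.sq_norm]
  simp [Complex.normSq_apply, Complex.mul_re]

/-- derivative of `‖g‖²` -/
lemma HasDerivAt.normsq {g : ℝ → ℂ} {g' : ℂ} {x : ℝ} (h : HasDerivAt g g' x) :
    HasDerivAt (fun y => ‖g y‖ ^ 2) (2 * ((starRingEnd ℂ) (g x) * g').re) x := by
  have h1 := (h.cconj.mul h).cre
  have h2 : (2 * ((starRingEnd ℂ) (g x) * g').re)
      = ((starRingEnd ℂ) g' * g x + (starRingEnd ℂ) (g x) * g').re := by
    simp [Complex.add_re, Complex.mul_re, Complex.conj_re, Complex.conj_im]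
    ring
  rw [h2]
  refine HasDerivAt.congr_of_eventuallyEq h1 ?_
  filter_upwards with y
  rw [normsq_eq]
  rfl

end WGHelpers


lemma normsq_eq' (z : ℂ) : ‖z‖ ^ 2 = z.re ^ 2 + z.im ^ 2 := by
  rw [Complex.sq_norm, Complex.normSq_apply]; ring

lemma grand_algebra (y s t : ℝ) (z z1 z2 z3 z11 z22 z33 z12 z13 z23 : ℂ) :
    2 * ((starRingEnd ℂ) (-(z11 + z22 + z33)) *
        ((y:ℂ)*z1 + (s:ℂ)*z2 + (t:ℂ)*z3 + (3/2:ℂ)*z)).re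
    = 2 * (‖z1‖^2 + ‖z2‖^2 + ‖z3‖^2)
    - (1*(‖z1‖^2-‖z2‖^2-‖z3‖^2)
        + y*(2*((starRingEnd ℂ) z1*z11).re - 2*((starRingEnd ℂ) z2*z12).re
            - 2*((starRingEnd ℂ) z3*z13).re)
        + 2*((starRingEnd ℂ) z11*((s:ℂ)*z2+(t:ℂ)*z3)
            + (starRingEnd ℂ) z1*((s:ℂ)*z12+(t:ℂ)*z13)).re
        + 3*((starRingEnd ℂ) z11*z + (starRingEnd ℂ) z1*z1).re)
    - (1*(‖z2‖^2-‖z1‖^2-‖z3‖^2)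
        + s*(2*((starRingEnd ℂ) z2*z22).re - 2*((starRingEnd ℂ) z1*z12).re
            - 2*((starRingEnd ℂ) z3*z23).re)
        + 2*((starRingEnd ℂ) z22*((y:ℂ)*z1+(t:ℂ)*z3)
            + (starRingEnd ℂ) z2*((y:ℂ)*z12+(t:ℂ)*z23)).re
        + 3*((starRingEnd ℂ) z22*z + (starRingEnd ℂ) z2*z2).re)
    - (1*(‖z3‖^2-‖z1‖^2-‖z2‖^2)
        + t*(2*((starRingEnd ℂ) z3*z33).re - 2*((starRingEnd ℂ) z1*z13).re
            - 2*((starRingEnd ℂ) z2*z23).re)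
        + 2*((starRingEnd ℂ) z33*((y:ℂ)*z1+(s:ℂ)*z2)
            + (starRingEnd ℂ) z3*((y:ℂ)*z13+(s:ℂ)*z23)).re
        + 3*((starRingEnd ℂ) z33*z + (starRingEnd ℂ) z3*z3).re) := by
  have h32 : (3/2 : ℂ) = ((3/2 : ℝ) : ℂ) := by norm_num
  rw [h32]
  simp only [normsq_eq', Complex.mul_re, Complex.mul_im, Complex.add_re, Complex.add_im,
    Complex.neg_re, Complex.neg_im, Complex.conj_re, Complex.conj_im,
    Complex.ofReal_re, Complex.ofReal_im]
  ring

noncomputable section WGFields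

def Pf (F : ℝ × ℝ × ℝ → ℂ) (p : ℝ × ℝ × ℝ) : ℝ :=
  p.1 * (‖DD1 F p‖^2 - ‖DD2 F p‖^2 - ‖DD3 F p‖^2)
  + 2 * ((starRingEnd ℂ) (DD1 F p) * ((p.2.1:ℂ) * DD2 F p + (p.2.2:ℂ) * DD3 F p)).re
  + 3 * ((starRingEnd ℂ) (DD1 F p) * F p).re

def Qf (F : ℝ × ℝ × ℝ → ℂ) (p : ℝ × ℝ × ℝ) : ℝ :=
  p.2.1 * (‖DD2 F p‖^2 - ‖DD1 F p‖^2 - ‖DD3 F p‖^2)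
  + 2 * ((starRingEnd ℂ) (DD2 F p) * ((p.1:ℂ) * DD1 F p + (p.2.2:ℂ) * DD3 F p)).re
  + 3 * ((starRingEnd ℂ) (DD2 F p) * F p).re

def Rf (F : ℝ × ℝ × ℝ → ℂ) (p : ℝ × ℝ × ℝ) : ℝ :=
  p.2.2 * (‖DD3 F p‖^2 - ‖DD1 F p‖^2 - ‖DD2 F p‖^2)
  + 2 * ((starRingEnd ℂ) (DD3 F p) * ((p.1:ℂ) * DD1 F p + (p.2.1:ℂ) * DD2 F p)).re
  + 3 * ((starRingEnd ℂ) (DD3 F p) * F p).re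

def dPf (F : ℝ × ℝ × ℝ → ℂ) (p : ℝ × ℝ × ℝ) : ℝ :=
  1 * (‖DD1 F p‖^2 - ‖DD2 F p‖^2 - ‖DD3 F p‖^2)
  + p.1 * (2 * ((starRingEnd ℂ) (DD1 F p) * DD1 (DD1 F) p).re
      - 2 * ((starRingEnd ℂ) (DD2 F p) * DD1 (DD2 F) p).re
      - 2 * ((starRingEnd ℂ) (DD3 F p) * DD1 (DD3 F) p).re)
  + 2 * ((starRingEnd ℂ) (DD1 (DD1 F) p) * ((p.2.1:ℂ) * DD2 F p + (p.2.2:ℂ) * DD3 F p)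
      + (starRingEnd ℂ) (DD1 F p) * ((p.2.1:ℂ) * DD1 (DD2 F) p + (p.2.2:ℂ) * DD1 (DD3 F) p)).re
  + 3 * ((starRingEnd ℂ) (DD1 (DD1 F) p) * F p + (starRingEnd ℂ) (DD1 F p) * DD1 F p).re

def dQf (F : ℝ × ℝ × ℝ → ℂ) (p : ℝ × ℝ × ℝ) : ℝ :=
  1 * (‖DD2 F p‖^2 - ‖DD1 F p‖^2 - ‖DD3 F p‖^2)
  + p.2.1 * (2 * ((starRingEnd ℂ) (DD2 F p) * DD2 (DD2 F) p).re
      - 2 * ((starRingEnd ℂ) (DD1 F p) * DD2 (DD1 F) p).re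
      - 2 * ((starRingEnd ℂ) (DD3 F p) * DD2 (DD3 F) p).re)
  + 2 * ((starRingEnd ℂ) (DD2 (DD2 F) p) * ((p.1:ℂ) * DD1 F p + (p.2.2:ℂ) * DD3 F p)
      + (starRingEnd ℂ) (DD2 F p) * ((p.1:ℂ) * DD2 (DD1 F) p + (p.2.2:ℂ) * DD2 (DD3 F) p)).re
  + 3 * ((starRingEnd ℂ) (DD2 (DD2 F) p) * F p + (starRingEnd ℂ) (DD2 F p) * DD2 F p).re

def dRf (F : ℝ × ℝ × ℝ → ℂ) (p : ℝ × ℝ × ℝ) : ℝ :=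
  1 * (‖DD3 F p‖^2 - ‖DD1 F p‖^2 - ‖DD2 F p‖^2)
  + p.2.2 * (2 * ((starRingEnd ℂ) (DD3 F p) * DD3 (DD3 F) p).re
      - 2 * ((starRingEnd ℂ) (DD1 F p) * DD3 (DD1 F) p).re
      - 2 * ((starRingEnd ℂ) (DD2 F p) * DD3 (DD2 F) p).re)
  + 2 * ((starRingEnd ℂ) (DD3 (DD3 F) p) * ((p.1:ℂ) * DD1 F p + (p.2.1:ℂ) * DD2 F p)
      + (starRingEnd ℂ) (DD3 F p) * ((p.1:ℂ) * DD3 (DD1 F) p + (p.2.1:ℂ) * DD3 (DD2 F) p)).re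
  + 3 * ((starRingEnd ℂ) (DD3 (DD3 F) p) * F p + (starRingEnd ℂ) (DD3 F p) * DD3 F p).re

variable {F : ℝ × ℝ × ℝ → ℂ}

lemma hdP (hF : ContDiff ℝ (⊤ : ℕ∞) F) (y s t : ℝ) :
    HasDerivAt (fun y' => Pf F (y', s, t)) (dPf F (y, s, t)) y := by
  have hg := hdA1 hF y s t
  have hg1 := hdA1 (DD1_contDiff hF) y s t
  have hg2 := hdA1 (DD2_contDiff hF) y s t
  have hg3 := hdA1 (DD3_contDiff hF) y s t
  exact (((hasDerivAt_id y).mul ((hg1.normsq.sub hg2.normsq).sub hg3.normsq)).add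
    (((hg1.cconj.mul ((hg2.const_mul ((s:ℂ))).add (hg3.const_mul ((t:ℂ))))).cre).const_mul 2)).add
    (((hg1.cconj.mul hg).cre).const_mul 3)

lemma hdQ (hF : ContDiff ℝ (⊤ : ℕ∞) F) (y s t : ℝ) :
    HasDerivAt (fun s' => Qf F (y, s', t)) (dQf F (y, s, t)) s := by
  have hg := hdA2 hF y s t
  have hg1 := hdA2 (DD1_contDiff hF) y s t
  have hg2 := hdA2 (DD2_contDiff hF) y s t
  have hg3 := hdA2 (DD3_contDiff hF) y s t
  exact (((hasDerivAt_id s).mul ((hg2.normsq.sub hg1.normsq).sub hg3.normsq)).add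
    (((hg2.cconj.mul ((hg1.const_mul ((y:ℂ))).add (hg3.const_mul ((t:ℂ))))).cre).const_mul 2)).add
    (((hg2.cconj.mul hg).cre).const_mul 3)

lemma hdR (hF : ContDiff ℝ (⊤ : ℕ∞) F) (y s t : ℝ) :
    HasDerivAt (fun t' => Rf F (y, s, t')) (dRf F (y, s, t)) t := by
  have hg := hdA3 hF y s t
  have hg1 := hdA3 (DD1_contDiff hF) y s t
  have hg2 := hdA3 (DD2_contDiff hF) y s t
  have hg3 := hdA3 (DD3_contDiff hF) y s t
  exact (((hasDerivAt_id t).mul ((hg3.normsq.sub hg1.normsq).sub hg2.normsq)).add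
    (((hg3.cconj.mul ((hg1.const_mul ((y:ℂ))).add (hg2.const_mul ((s:ℂ))))).cre).const_mul 2)).add
    (((hg3.cconj.mul hg).cre).const_mul 3)

end WGFields


variable {E : Type*} [NormedAddCommGroup E] [NormedSpace ℝ E]

lemma wg_hasCompactSupport {K : Set ℝ} (hK : IsCompact K) {a b c d : ℝ}
    {G : ℝ × ℝ × ℝ → E} (hGs : Function.support G ⊆ K ×ˢ (Icc a b ×ˢ Icc c d)) :
    HasCompactSupport G :=
  HasCompactSupport.intro (hK.prod (isCompact_Icc.prod isCompact_Icc))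
    (fun x hx => by
      by_contra h0
      exact hx (hGs h0))

lemma wg_integrable {K : Set ℝ} (hK : IsCompact K) {a b c d : ℝ}
    {G : ℝ × ℝ × ℝ → E} (hGc : Continuous G)
    (hGs : Function.support G ⊆ K ×ˢ (Icc a b ×ˢ Icc c d)) :
    Integrable G (volume.prod ((volume.restrict (Ioc a b)).prod (volume.restrict (Ioc c d)))) := by
  have h1 : Integrable G (volume : Measure (ℝ × ℝ × ℝ)) :=
    hGc.integrable_of_hasCompactSupport (wg_hasCompactSupport hK hGs)
  have h2 : volume.prod ((volume.restrict (Ioc a b)).prod (volume.restrict (Ioc c d)))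
      = (volume : Measure (ℝ × ℝ × ℝ)).restrict (univ ×ˢ (Ioc a b ×ˢ Ioc c d)) := by
    rw [Measure.prod_restrict, ← Measure.restrict_univ (μ := (volume : Measure ℝ)),
      Measure.prod_restrict]
    simp only [Measure.restrict_univ]
    rw [Measure.volume_eq_prod, Measure.volume_eq_prod]
  rw [h2]
  exact h1.restrict

lemma wg_slice2 {a b c d : ℝ} {G : ℝ × ℝ × ℝ → E} (hGc : Continuous G) (y : ℝ) :
    Integrable (fun z : ℝ × ℝ => G (y, z))
      ((volume.restrict (Ioc a b)).prod (volume.restrict (Ioc c d))) := by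
  rw [Measure.prod_restrict]
  have h1 : IntegrableOn (fun z : ℝ × ℝ => G (y, z)) (Icc a b ×ˢ Icc c d)
      ((volume : Measure ℝ).prod (volume : Measure ℝ)) := by
    rw [← Measure.volume_eq_prod]
    exact ContinuousOn.integrableOn_compact (isCompact_Icc.prod isCompact_Icc)
      (hGc.comp (Continuous.prodMk_right y)).continuousOn
  exact h1.mono_set (prod_mono Ioc_subset_Icc_self Ioc_subset_Icc_self)

lemma wg_triple_eq [CompleteSpace E] {K : Set ℝ} (hK : IsCompact K) {a b c d : ℝ}
    {G : ℝ × ℝ × ℝ → E} (hGc : Continuous G)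
    (hGs : Function.support G ⊆ K ×ˢ (Icc a b ×ˢ Icc c d)) :
    ∫ y : ℝ, ∫ s in Ioc a b, ∫ t in Ioc c d, G (y, s, t)
      = ∫ p, G p ∂(volume.prod ((volume.restrict (Ioc a b)).prod (volume.restrict (Ioc c d)))) := by
  rw [MeasureTheory.integral_prod _ (wg_integrable hK hGc hGs)]
  congr 1
  funext y
  rw [MeasureTheory.integral_prod _ (wg_slice2 hGc y)]

/-- FTC on the line for compactly supported C¹ functions. -/
lemma wg_line_integral_zero {g h : ℝ → ℝ} {M : ℝ} (hM : 0 ≤ M)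
    (hder : ∀ x, HasDerivAt g (h x) x) (hcont : Continuous h)
    (hg : ∀ x, x ∉ Icc (-M) M → g x = 0) (hh : ∀ x, x ∉ Icc (-M) M → h x = 0) :
    ∫ x, h x = 0 := by
  have hsub : ∀ x, x ∉ Ioc (-(M+1)) (M+1) → h x = 0 := by
    intro x hx
    apply hh
    intro hmem
    exact hx ⟨by linarith [hmem.1], by linarith [hmem.2]⟩
  rw [← setIntegral_eq_integral_of_forall_compl_eq_zero hsub]
  rw [← intervalIntegral.integral_of_le (by linarith : -(M+1) ≤ M+1)]
  rw [intervalIntegral.integral_eq_sub_of_hasDerivAt (fun x _ => hder x)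
    (hcont.intervalIntegrable _ _)]
  rw [hg (M+1) (by intro hmem; linarith [hmem.2]), hg (-(M+1)) (by intro hmem; linarith [hmem.1])]
  ring

theorem wg_main (a b c d : ℝ) (hab : a ≤ b) (hcd : c ≤ d)
    (F : ℝ × ℝ × ℝ → ℂ) (hF : ContDiff ℝ (⊤ : ℕ∞) F)
    (K : Set ℝ) (hK : IsCompact K)
    (hs : Function.support F ⊆ K ×ˢ (Icc a b ×ˢ Icc c d))
    (hb1 : ∀ y t, F (y, a, t) = 0 ∧ F (y, b, t) = 0)
    (hb2 : ∀ y s, F (y, s, c) = 0 ∧ F (y, s, d) = 0) :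
    2 * (∫ y : ℝ, ∫ s in Ioc a b, ∫ t in Ioc c d,
        (starRingEnd ℂ) (-(DD1 (DD1 F) (y, s, t) + DD2 (DD2 F) (y, s, t) + DD3 (DD3 F) (y, s, t))) *
          ((y : ℂ) * DD1 F (y, s, t) + (s : ℂ) * DD2 F (y, s, t) + (t : ℂ) * DD3 F (y, s, t)
            + (3 / 2 : ℂ) * F (y, s, t))).re
      = 2 * (∫ y : ℝ, ∫ s in Ioc a b, ∫ t in Ioc c d,
            (‖DD1 F (y, s, t)‖ ^ 2 + ‖DD2 F (y, s, t)‖ ^ 2 + ‖DD3 F (y, s, t)‖ ^ 2))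
        - (∫ y : ℝ, ∫ t in Ioc c d, (b * ‖DD2 F (y, b, t)‖ ^ 2 - a * ‖DD2 F (y, a, t)‖ ^ 2))
        - (∫ y : ℝ, ∫ s in Ioc a b, (d * ‖DD3 F (y, s, d)‖ ^ 2 - c * ‖DD3 F (y, s, c)‖ ^ 2)) := by
  classical
  set S : Set (ℝ × ℝ × ℝ) := K ×ˢ (Icc a b ×ˢ Icc c d) with hS_def
  have hScl : IsClosed S := (hK.isClosed.prod (isClosed_Icc.prod isClosed_Icc))
  -- continuity of all partial derivatives
  have c0 : Continuous F := hF.continuous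
  have hF1 : ContDiff ℝ (⊤ : ℕ∞) (DD1 F) := DD1_contDiff hF
  have hF2 : ContDiff ℝ (⊤ : ℕ∞) (DD2 F) := DD2_contDiff hF
  have hF3 : ContDiff ℝ (⊤ : ℕ∞) (DD3 F) := DD3_contDiff hF
  have c1 : Continuous (DD1 F) := hF1.continuous
  have c2 : Continuous (DD2 F) := hF2.continuous
  have c3 : Continuous (DD3 F) := hF3.continuous
  have c11 : Continuous (DD1 (DD1 F)) := (DD1_contDiff hF1).continuous
  have c22 : Continuous (DD2 (DD2 F)) := (DD2_contDiff hF2).continuous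
  have c33 : Continuous (DD3 (DD3 F)) := (DD3_contDiff hF3).continuous
  have c12 : Continuous (DD1 (DD2 F)) := (DD1_contDiff hF2).continuous
  have c13 : Continuous (DD1 (DD3 F)) := (DD1_contDiff hF3).continuous
  have c23 : Continuous (DD2 (DD3 F)) := (DD2_contDiff hF3).continuous
  have c21 : Continuous (DD2 (DD1 F)) := (DD2_contDiff hF1).continuous
  have c31 : Continuous (DD3 (DD1 F)) := (DD3_contDiff hF1).continuous
  have c32 : Continuous (DD3 (DD2 F)) := (DD3_contDiff hF2).continuous
  -- supports
  have sd : ∀ (G : ℝ × ℝ × ℝ → ℂ), Function.support G ⊆ S → (∀ v,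
      Function.support (fun p => fderiv ℝ G p v) ⊆ S) := fun G hG v => DD_support hScl hG v
  have s1 : Function.support (DD1 F) ⊆ S := sd F hs _
  have s2 : Function.support (DD2 F) ⊆ S := sd F hs _
  have s3 : Function.support (DD3 F) ⊆ S := sd F hs _
  have s11 : Function.support (DD1 (DD1 F)) ⊆ S := sd _ s1 _
  have s22 : Function.support (DD2 (DD2 F)) ⊆ S := sd _ s2 _
  have s33 : Function.support (DD3 (DD3 F)) ⊆ S := sd _ s3 _
  have s12 : Function.support (DD1 (DD2 F)) ⊆ S := sd _ s2 _
  have s13 : Function.support (DD1 (DD3 F)) ⊆ S := sd _ s3 _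
  have s23 : Function.support (DD2 (DD3 F)) ⊆ S := sd _ s3 _
  have s21 : Function.support (DD2 (DD1 F)) ⊆ S := sd _ s1 _
  have s31 : Function.support (DD3 (DD1 F)) ⊆ S := sd _ s1 _
  have s32 : Function.support (DD3 (DD2 F)) ⊆ S := sd _ s2 _
  have vz : ∀ (G : ℝ × ℝ × ℝ → ℂ), Function.support G ⊆ S → ∀ p ∉ S, G p = 0 :=
    fun G hG p hp => by
      by_contra h0
      exact hp (hG h0)
  -- boundary vanishing of the tangential derivatives
  have bd1a : ∀ y t : ℝ, DD1 F (y, a, t) = 0 := by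
    intro y t
    rw [← (hdA1 hF y a t).deriv,
      show (fun y' => F (y', a, t)) = (fun _ : ℝ => (0:ℂ)) from funext fun y' => (hb1 y' t).1]
    exact deriv_const _ _
  have bd1b : ∀ y t : ℝ, DD1 F (y, b, t) = 0 := by
    intro y t
    rw [← (hdA1 hF y b t).deriv,
      show (fun y' => F (y', b, t)) = (fun _ : ℝ => (0:ℂ)) from funext fun y' => (hb1 y' t).2]
    exact deriv_const _ _
  have bd3a : ∀ y t : ℝ, DD3 F (y, a, t) = 0 := by
    intro y t
    rw [← (hdA3 hF y a t).deriv,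
      show (fun t' => F (y, a, t')) = (fun _ : ℝ => (0:ℂ)) from funext fun t' => (hb1 y t').1]
    exact deriv_const _ _
  have bd3b : ∀ y t : ℝ, DD3 F (y, b, t) = 0 := by
    intro y t
    rw [← (hdA3 hF y b t).deriv,
      show (fun t' => F (y, b, t')) = (fun _ : ℝ => (0:ℂ)) from funext fun t' => (hb1 y t').2]
    exact deriv_const _ _
  have bd1c : ∀ y s : ℝ, DD1 F (y, s, c) = 0 := by
    intro y s
    rw [← (hdA1 hF y s c).deriv,
      show (fun y' => F (y', s, c)) = (fun _ : ℝ => (0:ℂ)) from funext fun y' => (hb2 y' s).1]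
    exact deriv_const _ _
  have bd1d : ∀ y s : ℝ, DD1 F (y, s, d) = 0 := by
    intro y s
    rw [← (hdA1 hF y s d).deriv,
      show (fun y' => F (y', s, d)) = (fun _ : ℝ => (0:ℂ)) from funext fun y' => (hb2 y' s).2]
    exact deriv_const _ _
  have bd2c : ∀ y s : ℝ, DD2 F (y, s, c) = 0 := by
    intro y s
    rw [← (hdA2 hF y s c).deriv,
      show (fun s' => F (y, s', c)) = (fun _ : ℝ => (0:ℂ)) from funext fun s' => (hb2 y s').1]
    exact deriv_const _ _
  have bd2d : ∀ y s : ℝ, DD2 F (y, s, d) = 0 := by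
    intro y s
    rw [← (hdA2 hF y s d).deriv,
      show (fun s' => F (y, s', d)) = (fun _ : ℝ => (0:ℂ)) from funext fun s' => (hb2 y s').2]
    exact deriv_const _ _
  -- the grand integrand and the norm-sum
  set Φ : ℝ × ℝ × ℝ → ℂ := fun p =>
    (starRingEnd ℂ) (-(DD1 (DD1 F) p + DD2 (DD2 F) p + DD3 (DD3 F) p)) *
      ((p.1 : ℂ) * DD1 F p + (p.2.1 : ℂ) * DD2 F p + (p.2.2 : ℂ) * DD3 F p
        + (3 / 2 : ℂ) * F p) with hΦ_def
  set NS : ℝ × ℝ × ℝ → ℝ := fun p =>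
    ‖DD1 F p‖ ^ 2 + ‖DD2 F p‖ ^ 2 + ‖DD3 F p‖ ^ 2 with hNS_def
  have cΦ : Continuous Φ := by
    rw [hΦ_def]
    have hneg : Continuous (fun p : ℝ×ℝ×ℝ =>
        -(DD1 (DD1 F) p + DD2 (DD2 F) p + DD3 (DD3 F) p)) := by fun_prop
    have hrest : Continuous (fun p : ℝ×ℝ×ℝ =>
        (p.1 : ℂ) * DD1 F p + (p.2.1 : ℂ) * DD2 F p + (p.2.2 : ℂ) * DD3 F p
          + (3 / 2 : ℂ) * F p) := by fun_prop
    exact (continuous_star.comp hneg).mul hrest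
  have cNS : Continuous NS := by rw [hNS_def]; fun_prop
  have cdP : Continuous (dPf F) := by unfold dPf; fun_prop
  have cdQ : Continuous (dQf F) := by unfold dQf; fun_prop
  have cdR : Continuous (dRf F) := by unfold dRf; fun_prop
  have sΦ : Function.support Φ ⊆ S := Function.support_subset_iff'.2 (fun p hp => by
    simp [hΦ_def, vz F hs p hp, vz _ s1 p hp, vz _ s2 p hp, vz _ s3 p hp,
      vz _ s11 p hp, vz _ s22 p hp, vz _ s33 p hp])
  have sNS : Function.support NS ⊆ S := Function.support_subset_iff'.2 (fun p hp => by
    simp [hNS_def, vz _ s1 p hp, vz _ s2 p hp, vz _ s3 p hp])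
  have sdP : Function.support (dPf F) ⊆ S := Function.support_subset_iff'.2 (fun p hp => by
    simp [dPf, vz F hs p hp, vz _ s1 p hp, vz _ s2 p hp, vz _ s3 p hp,
      vz _ s11 p hp, vz _ s12 p hp, vz _ s13 p hp])
  have sdQ : Function.support (dQf F) ⊆ S := Function.support_subset_iff'.2 (fun p hp => by
    simp [dQf, vz F hs p hp, vz _ s1 p hp, vz _ s2 p hp, vz _ s3 p hp,
      vz _ s22 p hp, vz _ s21 p hp, vz _ s23 p hp])
  have sdR : Function.support (dRf F) ⊆ S := Function.support_subset_iff'.2 (fun p hp => by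
    simp [dRf, vz F hs p hp, vz _ s1 p hp, vz _ s2 p hp, vz _ s3 p hp,
      vz _ s33 p hp, vz _ s31 p hp, vz _ s32 p hp])
  have sPf : ∀ p ∉ S, Pf F p = 0 := fun p hp => by
    simp [Pf, vz F hs p hp, vz _ s1 p hp, vz _ s2 p hp, vz _ s3 p hp]
  -- integrability over the big product measure
  set PP : Measure (ℝ × ℝ × ℝ) :=
    volume.prod ((volume.restrict (Ioc a b)).prod (volume.restrict (Ioc c d))) with hPP_def
  have intΦ : Integrable Φ PP := wg_integrable hK cΦ sΦ
  have intNS : Integrable NS PP := wg_integrable hK cNS sNS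
  have int2NS : Integrable (fun p => 2 * NS p) PP := intNS.const_mul 2
  have intdP : Integrable (dPf F) PP := wg_integrable hK cdP sdP
  have intdQ : Integrable (dQf F) PP := wg_integrable hK cdQ sdQ
  have intdR : Integrable (dRf F) PP := wg_integrable hK cdR sdR
  -- pointwise key identity
  have h21 : DD2 (DD1 F) = DD1 (DD2 F) := DD12_comm hF
  have h31 : DD3 (DD1 F) = DD1 (DD3 F) := DD13_comm hF
  have h32' : DD3 (DD2 F) = DD2 (DD3 F) := DD23_comm hF
  have keypt : ∀ p : ℝ × ℝ × ℝ,
      2 * (Φ p).re = 2 * NS p - dPf F p - dQf F p - dRf F p := by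
    intro p
    simp only [hΦ_def, hNS_def, dPf, dQf, dRf, h21, h31, h32']
    exact grand_algebra p.1 p.2.1 p.2.2 (F p) (DD1 F p) (DD2 F p) (DD3 F p)
      (DD1 (DD1 F) p) (DD2 (DD2 F) p) (DD3 (DD3 F) p)
      (DD1 (DD2 F) p) (DD1 (DD3 F) p) (DD2 (DD3 F) p)
  -- a compact interval containing K
  obtain ⟨M, hM⟩ := hK.isBounded.subset_closedBall 0
  have hKM : K ⊆ Icc (-(max M 0)) (max M 0) := by
    intro x hx
    have := hM hx
    rw [Metric.closedBall] at this
    simp only [mem_setOf_eq, Real.dist_eq, sub_zero] at this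
    constructor
    · have := abs_le.1 (le_trans this (le_max_left M 0))
      linarith [this.1]
    · exact le_trans (le_abs_self x) (le_trans this (le_max_left M 0))
  have hM0 : (0:ℝ) ≤ max M 0 := le_max_right M 0
  -- ∫ dPf = 0
  have hZ : ∫ p, dPf F p ∂PP = 0 := by
    rw [hPP_def, MeasureTheory.integral_prod_symm _ (by rw [← hPP_def]; exact intdP)]
    have hz : ∀ z : ℝ × ℝ, (∫ y : ℝ, dPf F (y, z)) = 0 := by
      intro z
      refine wg_line_integral_zero hM0 (fun x => hdP hF x z.1 z.2)
        (cdP.comp (by fun_prop)) ?_ ?_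
      · intro x hx
        refine sPf _ (fun hmem => hx (hKM hmem.1))
      · intro x hx
        refine Function.support_subset_iff'.1 sdP _ (fun hmem => hx (hKM hmem.1))
    calc (∫ z : ℝ × ℝ, (∫ y : ℝ, dPf F (y, z))
            ∂((volume.restrict (Ioc a b)).prod (volume.restrict (Ioc c d))))
        = ∫ _z : ℝ × ℝ, (0:ℝ)
            ∂((volume.restrict (Ioc a b)).prod (volume.restrict (Ioc c d))) := by
          exact integral_congr_ae (Filter.Eventually.of_forall hz)
      _ = 0 := integral_zero _ _
  -- boundary values
  have hQa : ∀ y t : ℝ, Qf F (y, a, t) = a * ‖DD2 F (y, a, t)‖ ^ 2 := by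
    intro y t
    simp [Qf, (hb1 y t).1, bd1a y t, bd3a y t]
  have hQb : ∀ y t : ℝ, Qf F (y, b, t) = b * ‖DD2 F (y, b, t)‖ ^ 2 := by
    intro y t
    simp [Qf, (hb1 y t).2, bd1b y t, bd3b y t]
  have hRc : ∀ y s : ℝ, Rf F (y, s, c) = c * ‖DD3 F (y, s, c)‖ ^ 2 := by
    intro y s
    simp [Rf, (hb2 y s).1, bd1c y s, bd2c y s]
  have hRd : ∀ y s : ℝ, Rf F (y, s, d) = d * ‖DD3 F (y, s, d)‖ ^ 2 := by
    intro y s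
    simp [Rf, (hb2 y s).2, bd1d y s, bd2d y s]
  -- ∫ dQf = first boundary integral
  have hBQ : ∫ p, dQf F p ∂PP
      = ∫ y : ℝ, ∫ t in Ioc c d, (b * ‖DD2 F (y, b, t)‖ ^ 2 - a * ‖DD2 F (y, a, t)‖ ^ 2) := by
    rw [hPP_def, MeasureTheory.integral_prod _ (by rw [← hPP_def]; exact intdQ)]
    congr 1
    funext y
    rw [MeasureTheory.integral_prod_symm _ (wg_slice2 cdQ y)]
    congr 1
    funext t
    have hftc : (∫ s in Ioc a b, dQf F (y, s, t)) = Qf F (y, b, t) - Qf F (y, a, t) := by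
      rw [← intervalIntegral.integral_of_le hab]
      exact intervalIntegral.integral_eq_sub_of_hasDerivAt (fun x _ => hdQ hF y x t)
        ((cdQ.comp (by fun_prop : Continuous fun s' : ℝ => ((y, s', t) : ℝ×ℝ×ℝ))).intervalIntegrable _ _)
    rw [hftc, hQb y t, hQa y t]
  -- ∫ dRf = second boundary integral
  have hBR : ∫ p, dRf F p ∂PP
      = ∫ y : ℝ, ∫ s in Ioc a b, (d * ‖DD3 F (y, s, d)‖ ^ 2 - c * ‖DD3 F (y, s, c)‖ ^ 2) := by
    rw [hPP_def, MeasureTheory.integral_prod _ (by rw [← hPP_def]; exact intdR)]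
    congr 1
    funext y
    rw [MeasureTheory.integral_prod _ (wg_slice2 cdR y)]
    congr 1
    funext s
    have hftc : (∫ t in Ioc c d, dRf F (y, s, t)) = Rf F (y, s, d) - Rf F (y, s, c) := by
      rw [← intervalIntegral.integral_of_le hcd]
      exact intervalIntegral.integral_eq_sub_of_hasDerivAt (fun x _ => hdR hF y s x)
        ((cdR.comp (by fun_prop : Continuous fun t' : ℝ => ((y, s, t') : ℝ×ℝ×ℝ))).intervalIntegrable _ _)
    rw [hftc, hRd y s, hRc y s]
  -- main computation
  have E1 : (∫ y : ℝ, ∫ s in Ioc a b, ∫ t in Ioc c d,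
        (starRingEnd ℂ) (-(DD1 (DD1 F) (y, s, t) + DD2 (DD2 F) (y, s, t) + DD3 (DD3 F) (y, s, t))) *
          ((y : ℂ) * DD1 F (y, s, t) + (s : ℂ) * DD2 F (y, s, t) + (t : ℂ) * DD3 F (y, s, t)
            + (3 / 2 : ℂ) * F (y, s, t))) = ∫ p, Φ p ∂PP := wg_triple_eq hK cΦ sΦ
  have E6 : (∫ y : ℝ, ∫ s in Ioc a b, ∫ t in Ioc c d,
        (‖DD1 F (y, s, t)‖ ^ 2 + ‖DD2 F (y, s, t)‖ ^ 2 + ‖DD3 F (y, s, t)‖ ^ 2))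
      = ∫ p, NS p ∂PP := wg_triple_eq hK cNS sNS
  rw [E1, E6]
  have E2 : (∫ p, Φ p ∂PP).re = ∫ p, (Φ p).re ∂PP := (integral_re intΦ).symm
  rw [E2]
  have E3 : 2 * (∫ p, (Φ p).re ∂PP) = ∫ p, 2 * (Φ p).re ∂PP :=
    (MeasureTheory.integral_const_mul 2 _).symm
  rw [E3]
  have E4 : ∫ p, 2 * (Φ p).re ∂PP
      = ∫ p, (2 * NS p - dPf F p - dQf F p - dRf F p) ∂PP :=
    integral_congr_ae (Filter.Eventually.of_forall keypt)
  rw [E4]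
  have E5a : ∫ p, (2 * NS p - dPf F p - dQf F p - dRf F p) ∂PP
      = (∫ p, (2 * NS p - dPf F p - dQf F p) ∂PP) - ∫ p, dRf F p ∂PP :=
    MeasureTheory.integral_sub ((int2NS.sub intdP).sub intdQ) intdR
  have E5b : ∫ p, (2 * NS p - dPf F p - dQf F p) ∂PP
      = (∫ p, (2 * NS p - dPf F p) ∂PP) - ∫ p, dQf F p ∂PP :=
    MeasureTheory.integral_sub (int2NS.sub intdP) intdQ
  have E5c : ∫ p, (2 * NS p - dPf F p) ∂PP
      = (∫ p, 2 * NS p ∂PP) - ∫ p, dPf F p ∂PP :=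
    MeasureTheory.integral_sub int2NS intdP
  have E5d : ∫ p, 2 * NS p ∂PP = 2 * ∫ p, NS p ∂PP :=
    MeasureTheory.integral_const_mul 2 NS
  rw [E5a, E5b, E5c, E5d, hZ, hBQ, hBR]
  ring

/-- the quadratic form of the commutator `[Δ_D, iA₁]` of the Dirichlet
Laplacian on the straight waveguide `Ω = ℝ × [a,b] × [c,d]` with the generator of
dilations in all directions, evaluated on a smooth function supported in
`K × [a,b] × [c,d]` and vanishing on the lateral boundary:
`2 Re ∫_Ω conj(−Δf)·(y∂_y f + σ₁∂_{σ₁} f + σ₂∂_{σ₂} f + (3/2) f)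
  = 2∫_Ω |∇f|² − ∫(b|∂₁f|²(b) − a|∂₁f|²(a)) − ∫(d|∂₂f|²(d) − c|∂₂f|²(c))`. -/
theorem statement6 (a b c d : ℝ) (hab : a < b) (hcd : c < d)
    (f : ℝ → ℝ → ℝ → ℂ)
    (hf : ContDiff ℝ (⊤ : ℕ∞) (fun p : ℝ × ℝ × ℝ => f p.1 p.2.1 p.2.2))
    (K : Set ℝ) (hK : IsCompact K)
    (hsupp : ∀ y s t, f y s t ≠ 0 → y ∈ K ∧ s ∈ Set.Icc a b ∧ t ∈ Set.Icc c d)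
    (hbd₁ : ∀ y t, f y a t = 0 ∧ f y b t = 0)
    (hbd₂ : ∀ y s, f y s c = 0 ∧ f y s d = 0) :
    2 * (∫ y : ℝ, ∫ s in a..b, ∫ t in c..d,
        (starRingEnd ℂ) (-(dY (dY f) y s t + dS (dS f) y s t + dT (dT f) y s t)) *
          ((y : ℂ) * dY f y s t + (s : ℂ) * dS f y s t + (t : ℂ) * dT f y s t
            + (3 / 2 : ℂ) * f y s t)).re
      = 2 * (∫ y : ℝ, ∫ s in a..b, ∫ t in c..d,
            (‖dY f y s t‖ ^ 2 + ‖dS f y s t‖ ^ 2 + ‖dT f y s t‖ ^ 2))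
        - (∫ y : ℝ, ∫ t in c..d, (b * ‖dS f y b t‖ ^ 2 - a * ‖dS f y a t‖ ^ 2))
        - (∫ y : ℝ, ∫ s in a..b, (d * ‖dT f y s d‖ ^ 2 - c * ‖dT f y s c‖ ^ 2)) := by
  have hF : ContDiff ℝ (⊤ : ℕ∞) (fun p : ℝ × ℝ × ℝ => f p.1 p.2.1 p.2.2) := hf
  set F : ℝ × ℝ × ℝ → ℂ := fun p => f p.1 p.2.1 p.2.2 with hF_def
  have e1 : dY f = fun y s t => DD1 F (y, s, t) := by
    funext y s t
    exact (hdA1 hF y s t).deriv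
  have e2 : dS f = fun y s t => DD2 F (y, s, t) := by
    funext y s t
    exact (hdA2 hF y s t).deriv
  have e3 : dT f = fun y s t => DD3 F (y, s, t) := by
    funext y s t
    exact (hdA3 hF y s t).deriv
  have e11 : dY (fun y s t => DD1 F (y, s, t)) = fun y s t => DD1 (DD1 F) (y, s, t) := by
    funext y s t
    exact (hdA1 (DD1_contDiff hF) y s t).deriv
  have e22 : dS (fun y s t => DD2 F (y, s, t)) = fun y s t => DD2 (DD2 F) (y, s, t) := by
    funext y s t
    exact (hdA2 (DD2_contDiff hF) y s t).deriv
  have e33 : dT (fun y s t => DD3 F (y, s, t)) = fun y s t => DD3 (DD3 F) (y, s, t) := by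
    funext y s t
    exact (hdA3 (DD3_contDiff hF) y s t).deriv
  have hsuppF : Function.support F ⊆ K ×ˢ (Set.Icc a b ×ˢ Set.Icc c d) := by
    intro p hp
    obtain ⟨h1, h2, h3⟩ := hsupp p.1 p.2.1 p.2.2 hp
    exact ⟨h1, h2, h3⟩
  have hb1' : ∀ y t, F (y, a, t) = 0 ∧ F (y, b, t) = 0 := fun y t => hbd₁ y t
  have hb2' : ∀ y s, F (y, s, c) = 0 ∧ F (y, s, d) = 0 := fun y s => hbd₂ y s
  simp only [e1, e2, e3, e11, e22, e33,
    intervalIntegral.integral_of_le hab.le, intervalIntegral.integral_of_le hcd.le]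
  exact wg_main a b c d hab.le hcd.le F hF K hK hsuppF hb1' hb2'
end
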